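/- Let χ ∈ C³(Ω,ℝ), let W ∈ C³(Ω,ℂ) satisfy ∂_z̄ W = (∂_z̄ χ)·conj(W), and set W̊ = ∂_z W − (∂_z χ)·conj(W). Then the vector Φ = (Im W̊, Re W̊)ᵀ satisfies H^{(1)} Φ = 0, where H^{(1)} is the 2×2 matrix operator with entries H^{(1)}_{ij} = δ_{ij}(−Δ + Σ_k((∂_kχ)² − ∂_k²χ)) + 2∂_i∂_jχ. -/

import Mathlib

noncomputable section
open Complex

/-- ∂_x of a complex-valued function on ℂ ≅ ℝ². -/
def dx (w : ℂ → ℂ) : ℂ → ℂ := fun z => fderiv ℝ w z 1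

/-- ∂_y of a complex-valued function on ℂ ≅ ℝ². -/
def dy (w : ℂ → ℂ) : ℂ → ℂ := fun z => fderiv ℝ w z Complex.I

/-- ∂_z = (∂_x - i∂_y)/2. -/
def dz (w : ℂ → ℂ) : ℂ → ℂ := fun z => (dx w z - Complex.I * dy w z) / 2

/-- ∂_z̄ = (∂_x + i∂_y)/2. -/
def dzb (w : ℂ → ℂ) : ℂ → ℂ := fun z => (dx w z + Complex.I * dy w z) / 2

/-- A real-valued function viewed as complex-valued. -/
def cc (χ : ℂ → ℝ) : ℂ → ℂ := fun z => (χ z : ℂ)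

/-- V = ∂_z̄ - (∂_z̄χ)·C. -/
def Vop (χ : ℂ → ℝ) (w : ℂ → ℂ) : ℂ → ℂ :=
  fun z => dzb w z - dzb (cc χ) z * (starRingEnd ℂ) (w z)

/-- V̄ = ∂_z - (∂_zχ)·C. -/
def Vbar (χ : ℂ → ℝ) (w : ℂ → ℂ) : ℂ → ℂ :=
  fun z => dz w z - dz (cc χ) z * (starRingEnd ℂ) (w z)

/-- V₁ = ∂_z̄ + (∂_zχ)·C. -/
def V1 (χ : ℂ → ℝ) (w : ℂ → ℂ) : ℂ → ℂ :=
  fun z => dzb w z + dz (cc χ) z * (starRingEnd ℂ) (w z)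

/-- V̄₁ = ∂_z + (∂_z̄χ)·C. -/
def Vbar1 (χ : ℂ → ℝ) (w : ℂ → ℂ) : ℂ → ℂ :=
  fun z => dz w z + dzb (cc χ) z * (starRingEnd ℂ) (w z)

/-- Partial derivative ∂_i of a real-valued function on ℂ ≅ ℝ². -/
def pdc (i : Fin 2) (f : ℂ → ℝ) : ℂ → ℝ :=
  fun z => fderiv ℝ f z (if i = 0 then 1 else Complex.I)

/-- H^{(0)} = -Δ + Σ_k ((∂_kχ)² - ∂_k²χ) acting on real functions on ℂ. -/
def H0c (χ f : ℂ → ℝ) : ℂ → ℝ := fun z =>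
  -(pdc 0 (pdc 0 f) z + pdc 1 (pdc 1 f) z) +
    (∑ k : Fin 2, ((pdc k χ z) ^ 2 - pdc k (pdc k χ) z)) * f z

/-- H^{(2)} = -Δ + Σ_k ((∂_kχ)² + ∂_k²χ). -/
def H2c (χ f : ℂ → ℝ) : ℂ → ℝ := fun z =>
  -(pdc 0 (pdc 0 f) z + pdc 1 (pdc 1 f) z) +
    (∑ k : Fin 2, ((pdc k χ z) ^ 2 + pdc k (pdc k χ) z)) * f z

/-- H^{(1)}_{ij} = δ_{ij} H^{(0)} + 2∂_i∂_jχ. -/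
def H1c (χ : ℂ → ℝ) (i j : Fin 2) (f : ℂ → ℝ) : ℂ → ℝ := fun z =>
  (if i = j then H0c χ f z else 0) + 2 * pdc i (pdc j χ) z * f z

/-!
Write `u = V̄W = W̊`. For real `χ` one has `conj (∂χ) = ∂̄χ`, and with this the first-order
operators intertwine, `V₁ V̄ = V̄₁ V`, for every `C²` function. The Vekua equation says `VW = 0`
on `Ω`, hence `V₁u = 0` on `Ω`, hence `V̄V₁u = 0`. Expanding,
`V̄V₁u = ∂∂̄u + (∂²χ) ū − |∂χ|² u`, and since `4∂∂̄ = Δ`, `4|∂χ|² = |∇χ|²` and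
`4∂²χ = χ_xx − χ_yy − 2iχ_xy`, the two components of `H^{(1)}Φ` are the imaginary and real parts
of `−4 V̄V₁u`.
-/

open Filter Topology ComplexConjugate

section
variable {E F G : Type*} [NormedAddCommGroup E] [NormedSpace ℝ E] [NormedAddCommGroup F]
  [NormedSpace ℝ F] [NormedAddCommGroup G] [NormedSpace ℝ G] {f : E → F} {g : E → ℂ} {x : E}

theorem ContDiffAt.fderiv_apply {m n : WithTop ℕ∞} (hf : ContDiffAt ℝ n f x) (hmn : m + 1 ≤ n)
    (v : E) : ContDiffAt ℝ m (fun y => fderiv ℝ f y v) x :=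
  (hf.fderiv_right hmn).clm_apply contDiffAt_const

theorem ContDiffAt.differentiableAt_fderiv_apply (hf : ContDiffAt ℝ 2 f x) (v : E) :
    DifferentiableAt ℝ (fun y => fderiv ℝ f y v) x :=
  (hf.fderiv_apply (m := 1) le_rfl v).differentiableAt one_ne_zero

theorem fderiv_fderiv_apply_comm (hf : ContDiffAt ℝ 2 f x) (v w : E) :
    fderiv ℝ (fun y => fderiv ℝ f y v) x w = fderiv ℝ (fun y => fderiv ℝ f y w) x v := by
  have hdf : DifferentiableAt ℝ (fderiv ℝ f) x :=
    (hf.fderiv_right (m := 1) le_rfl).differentiableAt one_ne_zero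
  simp only [fderiv_clm_apply hdf (differentiableAt_const _), fderiv_fun_const]
  simpa using hf.isSymmSndFDerivAt (by simp [minSmoothness_of_isRCLikeNormedField]) w v

theorem fderiv_clm_comp_apply (L : F →L[ℝ] G) (hf : DifferentiableAt ℝ f x) (v : E) :
    fderiv ℝ (fun y => L (f y)) x v = L (fderiv ℝ f x v) := by
  rw [fderiv_fun_comp x L.differentiableAt hf, L.fderiv]
  rfl

theorem fderiv_fderiv_clm_comp_apply (L : F →L[ℝ] G) (hf : ContDiffAt ℝ 2 f x) (v w : E) :
    fderiv ℝ (fun y => fderiv ℝ (fun t => L (f t)) y v) x w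
      = L (fderiv ℝ (fun y => fderiv ℝ f y v) x w) := by
  have hL : (fun y => fderiv ℝ (fun t => L (f t)) y v) =ᶠ[𝓝 x] fun y => L (fderiv ℝ f y v) :=
    (hf.eventually (by simp)).mono fun y hy =>
      fderiv_clm_comp_apply L (hy.differentiableAt two_ne_zero) v
  rw [hL.fderiv_eq, fderiv_clm_comp_apply L (hf.differentiableAt_fderiv_apply v)]

theorem ContDiffAt.conj {n : WithTop ℕ∞} (hg : ContDiffAt ℝ n g x) :
    ContDiffAt ℝ n (fun y => conj (g y)) x :=
  conjCLE.contDiff.contDiffAt.comp x hg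

theorem fderiv_conj_apply (v : E) :
    fderiv ℝ (fun y => conj (g y)) x v = conj (fderiv ℝ g x v) := by
  change fderiv ℝ (conjCLE ∘ g) x v = _
  rw [conjCLE.comp_fderiv]
  rfl

end

section Wirtinger
variable {f g : ℂ → ℂ} {z : ℂ}

theorem dz_conj : dz (fun y => conj (f y)) z = conj (dzb f z) := by
  simp only [dz, dzb, dx, dy, fderiv_conj_apply, map_div₀, map_add, map_mul, conj_I, map_ofNat]
  ring

theorem dzb_conj : dzb (fun y => conj (f y)) z = conj (dz f z) := by
  simp only [dz, dzb, dx, dy, fderiv_conj_apply, map_div₀, map_sub, map_mul, conj_I, map_ofNat]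
  ring

theorem dz_add (hf : DifferentiableAt ℝ f z) (hg : DifferentiableAt ℝ g z) :
    dz (fun y => f y + g y) z = dz f z + dz g z := by
  simp only [dz, dx, dy, fderiv_fun_add hf hg, add_apply]
  ring

theorem dz_sub (hf : DifferentiableAt ℝ f z) (hg : DifferentiableAt ℝ g z) :
    dz (fun y => f y - g y) z = dz f z - dz g z := by
  simp only [dz, dx, dy, fderiv_fun_sub hf hg, sub_apply]
  ring

theorem dzb_sub (hf : DifferentiableAt ℝ f z) (hg : DifferentiableAt ℝ g z) :
    dzb (fun y => f y - g y) z = dzb f z - dzb g z := by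
  simp only [dzb, dx, dy, fderiv_fun_sub hf hg, sub_apply]
  ring

theorem dz_mul (hf : DifferentiableAt ℝ f z) (hg : DifferentiableAt ℝ g z) :
    dz (fun y => f y * g y) z = dz f z * g z + f z * dz g z := by
  simp only [dz, dx, dy, fderiv_fun_mul hf hg, add_apply, smul_apply, smul_eq_mul]
  ring

theorem dzb_mul (hf : DifferentiableAt ℝ f z) (hg : DifferentiableAt ℝ g z) :
    dzb (fun y => f y * g y) z = dzb f z * g z + f z * dzb g z := by
  simp only [dzb, dx, dy, fderiv_fun_mul hf hg, add_apply, smul_apply, smul_eq_mul]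
  ring

end Wirtinger

section SecondOrder
variable {f : ℂ → ℂ} {z : ℂ}

theorem ContDiffAt.dx {m n : WithTop ℕ∞} (hf : ContDiffAt ℝ n f z) (hmn : m + 1 ≤ n) :
    ContDiffAt ℝ m (dx f) z :=
  hf.fderiv_apply hmn 1

theorem ContDiffAt.dy {m n : WithTop ℕ∞} (hf : ContDiffAt ℝ n f z) (hmn : m + 1 ≤ n) :
    ContDiffAt ℝ m (dy f) z :=
  hf.fderiv_apply hmn I

theorem ContDiffAt.dz {m n : WithTop ℕ∞} (hf : ContDiffAt ℝ n f z) (hmn : m + 1 ≤ n) :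
    ContDiffAt ℝ m (dz f) z :=
  ((hf.dx hmn).sub (contDiffAt_const.mul (hf.dy hmn))).div_const 2

theorem ContDiffAt.dzb {m n : WithTop ℕ∞} (hf : ContDiffAt ℝ n f z) (hmn : m + 1 ≤ n) :
    ContDiffAt ℝ m (dzb f) z :=
  ((hf.dx hmn).add (contDiffAt_const.mul (hf.dy hmn))).div_const 2

theorem dx_dy_comm (hf : ContDiffAt ℝ 2 f z) : dx (dy f) z = dy (dx f) z :=
  fderiv_fderiv_apply_comm hf I 1

theorem fderiv_dz_apply (hf : ContDiffAt ℝ 2 f z) (v : ℂ) :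
    fderiv ℝ (dz f) z v = (fderiv ℝ (dx f) z v - I * fderiv ℝ (dy f) z v) / 2 := by
  have hx := (hf.dx (m := 1) le_rfl).differentiableAt one_ne_zero
  have hy := (hf.dy (m := 1) le_rfl).differentiableAt one_ne_zero
  rw [show dz f = fun y => (dx f y - I * dy f y) * 2⁻¹ from funext fun y => div_eq_mul_inv _ _,
    fderiv_mul_const (hx.fun_sub (hy.const_mul I)), fderiv_fun_sub hx (hy.const_mul I),
    fderiv_const_mul hy]
  simp only [smul_apply, sub_apply, smul_eq_mul]
  ring

theorem fderiv_dzb_apply (hf : ContDiffAt ℝ 2 f z) (v : ℂ) :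
    fderiv ℝ (dzb f) z v = (fderiv ℝ (dx f) z v + I * fderiv ℝ (dy f) z v) / 2 := by
  have hx := (hf.dx (m := 1) le_rfl).differentiableAt one_ne_zero
  have hy := (hf.dy (m := 1) le_rfl).differentiableAt one_ne_zero
  rw [show dzb f = fun y => (dx f y + I * dy f y) * 2⁻¹ from funext fun y => div_eq_mul_inv _ _,
    fderiv_mul_const (hx.fun_add (hy.const_mul I)), fderiv_fun_add hx (hy.const_mul I),
    fderiv_const_mul hy]
  simp only [smul_apply, add_apply, smul_eq_mul]
  ring

theorem four_mul_dz_dzb (hf : ContDiffAt ℝ 2 f z) :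
    4 * dz (dzb f) z = dx (dx f) z + dy (dy f) z := by
  have h := dx_dy_comm hf
  simp only [dz, dx, dy, fderiv_dzb_apply hf] at h ⊢
  linear_combination I * h - fderiv ℝ (dy f) z I * I_sq

theorem dz_dzb_comm (hf : ContDiffAt ℝ 2 f z) : dz (dzb f) z = dzb (dz f) z := by
  have h := dx_dy_comm hf
  simp only [dz, dzb, dx, dy, fderiv_dz_apply hf, fderiv_dzb_apply hf] at h ⊢
  linear_combination (I / 2) * h

theorem four_mul_dz_dz (hf : ContDiffAt ℝ 2 f z) :
    4 * dz (dz f) z = dx (dx f) z - 2 * I * dy (dx f) z - dy (dy f) z := by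
  have h := dx_dy_comm hf
  simp only [dz, dx, dy, fderiv_dz_apply hf] at h ⊢
  linear_combination (-I) * h + fderiv ℝ (dy f) z I * I_sq

end SecondOrder

section RealPotential
variable {χ : ℂ → ℝ} {z : ℂ}

theorem pdc_zero (f : ℂ → ℝ) : pdc 0 f = fun z => fderiv ℝ f z 1 := by
  rfl

theorem pdc_one (f : ℂ → ℝ) : pdc 1 f = fun z => fderiv ℝ f z I := by
  rfl

theorem ContDiffAt.cc {n : WithTop ℕ∞} (hχ : ContDiffAt ℝ n χ z) : ContDiffAt ℝ n (cc χ) z :=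
  ofRealCLM.contDiff.contDiffAt.comp z hχ

theorem conj_dz_cc : conj (dz (cc χ) z) = dzb (cc χ) z := by
  rw [← dzb_conj]
  exact congrArg (dzb · z) (funext fun y => conj_ofReal (χ y))

theorem conj_dzb_cc : conj (dzb (cc χ) z) = dz (cc χ) z := by
  rw [← conj_dz_cc, conj_conj]

theorem fderiv_cc_apply (hχ : DifferentiableAt ℝ χ z) (v : ℂ) :
    fderiv ℝ (cc χ) z v = fderiv ℝ χ z v :=
  fderiv_clm_comp_apply ofRealCLM hχ v

theorem fderiv_fderiv_cc_apply (hχ : ContDiffAt ℝ 2 χ z) (v w : ℂ) :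
    fderiv ℝ (fun y => fderiv ℝ (cc χ) y v) z w = fderiv ℝ (fun y => fderiv ℝ χ y v) z w :=
  fderiv_fderiv_clm_comp_apply ofRealCLM hχ v w

theorem dz_cc (hχ : DifferentiableAt ℝ χ z) :
    dz (cc χ) z = (pdc 0 χ z - I * pdc 1 χ z) / 2 := by
  simp only [dz, dx, dy, pdc_zero, pdc_one, fderiv_cc_apply hχ]

theorem dzb_cc (hχ : DifferentiableAt ℝ χ z) :
    dzb (cc χ) z = (pdc 0 χ z + I * pdc 1 χ z) / 2 := by
  simp only [dzb, dx, dy, pdc_zero, pdc_one, fderiv_cc_apply hχ]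

theorem pdc_pdc_comm (hχ : ContDiffAt ℝ 2 χ z) : pdc 0 (pdc 1 χ) z = pdc 1 (pdc 0 χ) z := by
  simpa only [pdc_zero, pdc_one] using fderiv_fderiv_apply_comm hχ I 1

theorem dz_dz_cc (hχ : ContDiffAt ℝ 2 χ z) :
    dz (dz (cc χ)) z
      = (pdc 0 (pdc 0 χ) z - 2 * I * pdc 1 (pdc 0 χ) z - pdc 1 (pdc 1 χ) z) / 4 := by
  rw [eq_div_iff (by norm_num), mul_comm, four_mul_dz_dz hχ.cc]
  unfold dx dy
  simp only [pdc_zero, pdc_one, fderiv_fderiv_cc_apply hχ]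

end RealPotential

section Factorization
variable {χ : ℂ → ℝ} {W u : ℂ → ℂ} {z : ℂ}

theorem ContDiffAt.Vbar {m n : WithTop ℕ∞} (hχ : ContDiffAt ℝ n χ z) (hW : ContDiffAt ℝ n W z)
    (hmn : m + 1 ≤ n) : ContDiffAt ℝ m (Vbar χ W) z :=
  (hW.dz hmn).sub ((hχ.cc.dz hmn).mul (hW.of_le (le_self_add.trans hmn)).conj)

theorem V1_Vbar_eq_Vbar1_Vop (hχ : ContDiffAt ℝ 2 χ z) (hW : ContDiffAt ℝ 2 W z) :
    V1 χ (Vbar χ W) z = Vbar1 χ (Vop χ W) z := by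
  have hdW := (hW.dz (m := 1) le_rfl).differentiableAt one_ne_zero
  have hdbW := (hW.dzb (m := 1) le_rfl).differentiableAt one_ne_zero
  have hdχ := (hχ.cc.dz (m := 1) le_rfl).differentiableAt one_ne_zero
  have hdbχ := (hχ.cc.dzb (m := 1) le_rfl).differentiableAt one_ne_zero
  have hcW := hW.conj.differentiableAt two_ne_zero
  unfold V1 Vbar1 Vbar Vop
  rw [dzb_sub hdW (hdχ.fun_mul hcW), dzb_mul hdχ hcW, dzb_conj, dz_sub hdbW (hdbχ.fun_mul hcW),
    dz_mul hdbχ hcW, dz_conj, dz_dzb_comm hW, dz_dzb_comm hχ.cc]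
  simp only [map_sub, map_mul, conj_conj, conj_dz_cc, conj_dzb_cc]
  ring

theorem Vbar_V1 (hχ : ContDiffAt ℝ 2 χ z) (hu : ContDiffAt ℝ 2 u z) :
    Vbar χ (V1 χ u) z
      = dz (dzb u) z + dz (dz (cc χ)) z * conj (u z) - dz (cc χ) z * dzb (cc χ) z * u z := by
  have hdbu := (hu.dzb (m := 1) le_rfl).differentiableAt one_ne_zero
  have hdχ := (hχ.cc.dz (m := 1) le_rfl).differentiableAt one_ne_zero
  have hcu := hu.conj.differentiableAt two_ne_zero
  unfold Vbar V1
  rw [dz_add hdbu (hdχ.fun_mul hcu), dz_mul hdχ hcu, dz_conj]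
  simp only [map_add, map_mul, conj_conj, conj_dz_cc]
  ring

theorem Vbar_eq_zero_of_eventuallyEq_zero {f : ℂ → ℂ} (hf : f =ᶠ[𝓝 z] 0) : Vbar χ f z = 0 := by
  simp [Vbar, dz, dx, dy, hf.fderiv_eq, hf.eq_of_nhds]

theorem Vbar1_eq_zero_of_eventuallyEq_zero {f : ℂ → ℂ} (hf : f =ᶠ[𝓝 z] 0) :
    Vbar1 χ f z = 0 := by
  simp [Vbar1, dz, dx, dy, hf.fderiv_eq, hf.eq_of_nhds]

end Factorization

section RealForm
variable {χ : ℂ → ℝ} {u : ℂ → ℂ} {z : ℂ}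

theorem pdc_laplacian_clm_comp (L : ℂ →L[ℝ] ℝ) (hu : ContDiffAt ℝ 2 u z) :
    pdc 0 (pdc 0 (fun y => L (u y))) z + pdc 1 (pdc 1 (fun y => L (u y))) z
      = L (4 * dz (dzb u) z) := by
  rw [four_mul_dz_dzb hu, map_add]
  simp only [pdc_zero, pdc_one]
  unfold dx dy
  rw [fderiv_fderiv_clm_comp_apply L hu, fderiv_fderiv_clm_comp_apply L hu]

theorem sum_H1c_im_re (hχ : ContDiffAt ℝ 2 χ z) (hu : ContDiffAt ℝ 2 u z) (i : Fin 2) :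
    ∑ j : Fin 2, H1c χ i j (fun ζ => if j = 0 then (u ζ).im else (u ζ).re) z
      = -4 * (if i = 0 then (Vbar χ (V1 χ u) z).im else (Vbar χ (V1 χ u) z).re) := by
  have hIm := pdc_laplacian_clm_comp imCLM hu
  have hRe := pdc_laplacian_clm_comp reCLM hu
  simp only [imCLM_apply, reCLM_apply] at hIm hRe
  rw [Vbar_V1 hχ hu, dz_cc (hχ.differentiableAt two_ne_zero),
    dzb_cc (hχ.differentiableAt two_ne_zero), dz_dz_cc hχ]
  fin_cases i <;>
    simp only [Fin.sum_univ_two, H1c, H0c, Fin.isValue, Fin.zero_eta, Fin.mk_one, ↓reduceIte,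
      zero_ne_one, one_ne_zero, add_re, add_im, sub_re, sub_im, mul_re, mul_im, div_ofNat_re,
      div_ofNat_im, ofReal_re, ofReal_im, I_re, I_im, conj_re, conj_im, re_ofNat, im_ofNat]
      at hIm hRe ⊢
  · linear_combination -hIm + 2 * (u z).re * pdc_pdc_comm hχ
  · linear_combination -hRe

end RealForm

/-- Φ = (Im W̊, Re W̊)ᵀ is in the kernel of the matrix Hamiltonian H^{(1)}. -/
theorem matrix_ground_state (Ω : Set ℂ) (hΩ : IsOpen Ω)
    (χ : ℂ → ℝ) (hχ : ContDiffOn ℝ 3 χ Ω)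
    (W : ℂ → ℂ) (hW : ContDiffOn ℝ 3 W Ω)
    (hVekua : ∀ z ∈ Ω, dzb W z = dzb (cc χ) z * (starRingEnd ℂ) (W z)) :
    ∀ z ∈ Ω, ∀ i : Fin 2,
      (∑ j : Fin 2,
        H1c χ i j
          (fun ζ => if j = 0 then (dz W ζ - dz (cc χ) ζ * (starRingEnd ℂ) (W ζ)).im
                    else (dz W ζ - dz (cc χ) ζ * (starRingEnd ℂ) (W ζ)).re) z) = 0 := by
  intro z hz i
  have hχ' : ∀ ζ ∈ Ω, ContDiffAt ℝ 3 χ ζ := fun ζ hζ => hχ.contDiffAt (hΩ.mem_nhds hζ)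
  have hW' : ∀ ζ ∈ Ω, ContDiffAt ℝ 3 W ζ := fun ζ hζ => hW.contDiffAt (hΩ.mem_nhds hζ)
  have hVop : ∀ ζ ∈ Ω, Vop χ W =ᶠ[𝓝 ζ] 0 := fun ζ hζ => by
    filter_upwards [hΩ.mem_nhds hζ] with ξ hξ
    simp [Vop, hVekua ξ hξ]
  have hV1 : V1 χ (Vbar χ W) =ᶠ[𝓝 z] 0 := by
    filter_upwards [hΩ.mem_nhds hz] with ζ hζ
    rw [V1_Vbar_eq_Vbar1_Vop ((hχ' ζ hζ).of_le (by norm_num)) ((hW' ζ hζ).of_le (by norm_num)),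
      Vbar1_eq_zero_of_eventuallyEq_zero (hVop ζ hζ), Pi.zero_apply]
  change ∑ j : Fin 2, H1c χ i j (fun ζ => if j = 0 then (Vbar χ W ζ).im else (Vbar χ W ζ).re) z = 0
  rw [sum_H1c_im_re ((hχ' z hz).of_le (by norm_num)) ((hχ' z hz).Vbar (hW' z hz) (by norm_num)),
    Vbar_eq_zero_of_eventuallyEq_zero hV1]
  simp
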